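/- arXiv:2209.12346 — 2 statements merged into one kernel-verified Lean document; each statement's English description precedes it below -/
import Mathlib

section
/- In the centipede game with m = 2n decision nodes (n ≥ 1), the profile (0, 0) in which both players stop at their first opportunity is the UNIQUE pure-strategy Nash equilibrium: every pure Nash equilibrium (a, b) satisfies a = 0 and b = 0. -/
/-- Player 1's payoff in the reduced normal form of the centipede game with
`m = 2n` decision nodes.  Strategy `a < n` means "stop at own `(a+1)`-th node";
`a = n` means "always continue". -/
noncomputable def u1 (n : ℕ) (a b : Fin (n + 1)) : ℝ :=
  if a ≤ b ∧ (a : ℕ) < n then 2 * ((a : ℕ) + 1)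
  else if b < a then 2 * ((b : ℕ) + 1) - 1
  else 2 * n + 2

/-- Player 2's payoff in the reduced normal form of the centipede game. -/
noncomputable def u2 (n : ℕ) (a b : Fin (n + 1)) : ℝ :=
  if a ≤ b ∧ (a : ℕ) < n then 2 * ((a : ℕ) + 1) - 1
  else if b < a then 2 * ((b : ℕ) + 1) + 2
  else 2 * n + 1

/-- `(a, b)` is a pure-strategy Nash equilibrium. -/
def IsPureNash (n : ℕ) (a b : Fin (n + 1)) : Prop :=
  (∀ a', u1 n a' b ≤ u1 n a b) ∧ (∀ b', u2 n a b' ≤ u2 n a b)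

/-! Payoffs depend only on who stops first: the player with the smaller index, ties going to
player 1 (the profile `(n, n)`, where nobody stops, fits the same formulas). If player 2 stops first,
player 1 gains by stopping at the same node; if player 1 stops first but not at his first node,
player 2 gains by stopping one node earlier. Hence `a = 0`, and then `b = 0`, since against `b`
player 1 could get `2b + 2` instead of `2`. -/

section Payoffs

variable {n : ℕ} {a b : Fin (n + 1)}

lemma u1_of_le (h : a ≤ b) : u1 n a b = 2 * (a : ℕ) + 2 := by
  unfold u1
  split_ifs with hstop hlt
  · ring
  · exact absurd hlt h.not_gt
  · rw [show (a : ℕ) = n by have := a.is_le; omega]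

lemma u1_of_lt (h : b < a) : u1 n a b = 2 * (b : ℕ) + 1 := by
  rw [u1, if_neg fun h' => h.not_ge h'.1, if_pos h]
  ring

lemma u2_of_le (h : a ≤ b) : u2 n a b = 2 * (a : ℕ) + 1 := by
  unfold u2
  split_ifs with hstop hlt
  · ring
  · exact absurd hlt h.not_gt
  · rw [show (a : ℕ) = n by have := a.is_le; omega]

lemma u2_of_lt (h : b < a) : u2 n a b = 2 * (b : ℕ) + 4 := by
  rw [u2, if_neg fun h' => h.not_ge h'.1, if_pos h]
  ring

end Payoffs

namespace IsPureNash

variable {n : ℕ} {a b : Fin (n + 1)}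

lemma le (h : IsPureNash n a b) : a ≤ b := by
  by_contra! hba
  have hdev := h.1 b
  rw [u1_of_le le_rfl, u1_of_lt hba] at hdev
  linarith

lemma fst_eq_zero (h : IsPureNash n a b) : a = 0 := by
  by_contra ha
  obtain ⟨c, rfl⟩ := Fin.exists_succ_eq.2 ha
  have hdev := h.2 c.castSucc
  rw [u2_of_lt c.castSucc_lt_succ, u2_of_le h.le, Fin.val_castSucc, Fin.val_succ] at hdev
  push_cast at hdev
  linarith

lemma snd_eq_zero (h : IsPureNash n a b) : b = 0 := by
  have hdev := h.1 b
  rw [u1_of_le le_rfl, u1_of_le h.le, h.fst_eq_zero, Fin.val_zero, Nat.cast_zero] at hdev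
  have hb : ((b : ℕ) : ℝ) ≤ 0 := by linarith
  ext
  simpa using hb

end IsPureNash

theorem pure_nash_unique_general (n : ℕ) (a b : Fin (n + 1))
    (h : IsPureNash n a b) : a = 0 ∧ b = 0 :=
  ⟨h.fst_eq_zero, h.snd_eq_zero⟩

/-- In the centipede game with `m = 2n` decision nodes (`n ≥ 1`),
`(0, 0)` is the unique pure-strategy Nash equilibrium. -/
theorem pure_nash_unique (n : ℕ) (hn : 1 ≤ n) (a b : Fin (n + 1))
    (h : IsPureNash n a b) : a = 0 ∧ b = 0 :=
  pure_nash_unique_general n a b h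
end

section
/- In the centipede game with m = 2n decision nodes (n ≥ 1), every mixed-strategy Nash equilibrium (σ, τ) satisfies τ(0) ≥ 2/3; that is, player 2 must stop at its first decision node with probability at least 2/3 (otherwise player 1 would profitably deviate from stopping immediately). -/
open Finset

/-- A mixed strategy: a probability vector on `Fin (n+1)`. -/
def IsMixed {n : ℕ} (σ : Fin (n + 1) → ℝ) : Prop :=
  (∀ a, 0 ≤ σ a) ∧ ∑ a, σ a = 1

/-- Expected payoff under mixed strategies `σ` (player 1) and `τ` (player 2). -/
noncomputable def Eu {n : ℕ} (u : Fin (n + 1) → Fin (n + 1) → ℝ)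
    (σ τ : Fin (n + 1) → ℝ) : ℝ :=
  ∑ a, ∑ b, σ a * τ b * u a b

/-- `(σ, τ)` is a (mixed) Nash equilibrium. -/
def IsNash (n : ℕ) (σ τ : Fin (n + 1) → ℝ) : Prop :=
  IsMixed σ ∧ IsMixed τ ∧
    (∀ σ', IsMixed σ' → Eu (u1 n) σ' τ ≤ Eu (u1 n) σ τ) ∧
    (∀ τ', IsMixed τ' → Eu (u2 n) σ τ' ≤ Eu (u2 n) σ τ)

/-- The point mass on the pure strategy `a0`. -/
noncomputable def delta {n : ℕ} (a0 : Fin (n + 1)) : Fin (n + 1) → ℝ :=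
  fun a => if a = a0 then 1 else 0

lemma u1_stop {n : ℕ} {a b : Fin (n+1)} (hab : (a:ℕ) ≤ (b:ℕ)) :
    u1 n a b = 2*((a:ℕ)+1) := by
  have hb := b.isLt
  unfold u1
  split_ifs with h1 h2
  · rfl
  · exact absurd (Fin.lt_def.mp h2) (by omega)
  · have h3 : ¬ ((a:ℕ) < n) := fun hlt => h1 ⟨Fin.le_def.mpr hab, hlt⟩
    have ha : (a:ℕ) = n := by have := a.isLt; omega
    rw [ha]; push_cast; ring

lemma u1_cont {n : ℕ} {a b : Fin (n+1)} (h : (b:ℕ) < (a:ℕ)) :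
    u1 n a b = 2*((b:ℕ)+1) - 1 := by
  unfold u1
  rw [if_neg, if_pos (Fin.lt_def.mpr h)]
  rintro ⟨h1, _⟩; exact absurd (Fin.le_def.mp h1) (by omega)

lemma u2_stop {n : ℕ} {a b : Fin (n+1)} (hab : (a:ℕ) ≤ (b:ℕ)) :
    u2 n a b = 2*((a:ℕ)+1) - 1 := by
  have hb := b.isLt
  unfold u2
  split_ifs with h1 h2
  · rfl
  · exact absurd (Fin.lt_def.mp h2) (by omega)
  · have h3 : ¬ ((a:ℕ) < n) := fun hlt => h1 ⟨Fin.le_def.mpr hab, hlt⟩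
    have ha : (a:ℕ) = n := by have := a.isLt; omega
    rw [ha]; push_cast; ring

lemma u2_cont {n : ℕ} {a b : Fin (n+1)} (h : (b:ℕ) < (a:ℕ)) :
    u2 n a b = 2*((b:ℕ)+1) + 2 := by
  unfold u2
  rw [if_neg, if_pos (Fin.lt_def.mpr h)]
  rintro ⟨h1, _⟩; exact absurd (Fin.le_def.mp h1) (by omega)

lemma delta_mixed {n : ℕ} (a0 : Fin (n+1)) : IsMixed (delta a0) := by
  constructor
  · intro a; unfold delta; split <;> norm_num
  · simp [delta]

lemma Eu_left {n : ℕ} (u : Fin (n+1) → Fin (n+1) → ℝ) (σ τ : Fin (n+1) → ℝ) :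
    Eu u σ τ = ∑ a, σ a * ∑ b, τ b * u a b := by
  unfold Eu
  refine Finset.sum_congr rfl fun a _ => ?_
  rw [Finset.mul_sum]
  exact Finset.sum_congr rfl fun b _ => by ring

lemma Eu_right {n : ℕ} (u : Fin (n+1) → Fin (n+1) → ℝ) (σ τ : Fin (n+1) → ℝ) :
    Eu u σ τ = ∑ b, τ b * ∑ a, σ a * u a b := by
  unfold Eu
  rw [Finset.sum_comm]
  refine Finset.sum_congr rfl fun b _ => ?_
  rw [Finset.mul_sum]
  exact Finset.sum_congr rfl fun a _ => by ring

lemma Eu_delta_left {n : ℕ} (u : Fin (n+1) → Fin (n+1) → ℝ) (a0 : Fin (n+1))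
    (τ : Fin (n+1) → ℝ) : Eu u (delta a0) τ = ∑ b, τ b * u a0 b := by
  unfold Eu
  rw [Finset.sum_eq_single a0]
  · exact Finset.sum_congr rfl fun b _ => by simp [delta]
  · intro a _ ha
    apply Finset.sum_eq_zero; intro b _; simp [delta, ha]
  · intro h; exact absurd (Finset.mem_univ _) h

lemma Eu_delta_right {n : ℕ} (u : Fin (n+1) → Fin (n+1) → ℝ) (b0 : Fin (n+1))
    (σ : Fin (n+1) → ℝ) : Eu u σ (delta b0) = ∑ a, σ a * u a b0 := by
  unfold Eu
  refine Finset.sum_congr rfl fun a _ => ?_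
  rw [Finset.sum_eq_single b0]
  · simp [delta]
  · intro b _ hb; simp [delta, hb]
  · intro h; exact absurd (Finset.mem_univ _) h

lemma support_eq {m : ℕ} (w v : Fin m → ℝ) (hw0 : ∀ i, 0 ≤ w i)
    (hw1 : ∑ i, w i = 1) (M : ℝ) (hle : ∀ i, v i ≤ M)
    (hM : ∑ i, w i * v i = M) : ∀ i, w i ≠ 0 → v i = M := by
  intro i hi
  by_contra hne
  have hvi : v i < M := lt_of_le_of_ne (hle i) hne
  have hwi : 0 < w i := lt_of_le_of_ne (hw0 i) (Ne.symm hi)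
  have hlt : ∑ j, w j * v j < ∑ j, w j * M := by
    apply Finset.sum_lt_sum
    · intro j _; exact mul_le_mul_of_nonneg_left (hle j) (hw0 j)
    · exact ⟨i, Finset.mem_univ i, by nlinarith⟩
  rw [← Finset.sum_mul, hw1, one_mul, hM] at hlt
  exact lt_irrefl _ hlt

/-- In every mixed-strategy Nash equilibrium `(σ, τ)` of the
centipede game with `m = 2n` nodes (`n ≥ 1`), player 2 stops at its first
decision node with probability at least `2/3`. -/
theorem nash_tau_zero_ge_two_thirds (n : ℕ) (hn : 1 ≤ n)
    (σ τ : Fin (n + 1) → ℝ) (h : IsNash n σ τ) : τ 0 ≥ 2 / 3 := by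
  obtain ⟨hσ, hτ, h1, h2⟩ := h
  set V : Fin (n+1) → ℝ := fun a => ∑ b, τ b * u1 n a b with hVdef
  set W : Fin (n+1) → ℝ := fun b => ∑ a, σ a * u2 n a b with hWdef
  set M1 : ℝ := Eu (u1 n) σ τ with hM1def
  set M2 : ℝ := Eu (u2 n) σ τ with hM2def
  have hVle : ∀ a, V a ≤ M1 := fun a => by
    have := h1 (delta a) (delta_mixed a)
    rwa [Eu_delta_left] at this
  have hWle : ∀ b, W b ≤ M2 := fun b => by
    have := h2 (delta b) (delta_mixed b)
    rwa [Eu_delta_right] at this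
  have hVeq : ∀ a, σ a ≠ 0 → V a = M1 :=
    support_eq σ V hσ.1 hσ.2 M1 hVle (by rw [hM1def, Eu_left])
  have hWeq : ∀ b, τ b ≠ 0 → W b = M2 :=
    support_eq τ W hτ.1 hτ.2 M2 hWle (by rw [hM2def, Eu_right])
  -- supports are nonempty
  have hSne : (Finset.univ.filter (fun a => σ a ≠ 0)).Nonempty := by
    by_contra hc
    rw [Finset.not_nonempty_iff_eq_empty, Finset.filter_eq_empty_iff] at hc
    have h0 : ∑ a, σ a = 0 :=
      Finset.sum_eq_zero fun a _ => not_not.mp (hc (Finset.mem_univ a))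
    rw [hσ.2] at h0; norm_num at h0
  have hTne : (Finset.univ.filter (fun b => τ b ≠ 0)).Nonempty := by
    by_contra hc
    rw [Finset.not_nonempty_iff_eq_empty, Finset.filter_eq_empty_iff] at hc
    have h0 : ∑ b, τ b = 0 :=
      Finset.sum_eq_zero fun b _ => not_not.mp (hc (Finset.mem_univ b))
    rw [hτ.2] at h0; norm_num at h0
  set A : Fin (n+1) := (Finset.univ.filter (fun a => σ a ≠ 0)).max' hSne with hAdef
  set B : Fin (n+1) := (Finset.univ.filter (fun b => τ b ≠ 0)).max' hTne with hBdef
  have hAne : σ A ≠ 0 := by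
    have := (Finset.univ.filter (fun a => σ a ≠ 0)).max'_mem hSne
    simpa using (Finset.mem_filter.mp this).2
  have hBne : τ B ≠ 0 := by
    have := (Finset.univ.filter (fun b => τ b ≠ 0)).max'_mem hTne
    simpa using (Finset.mem_filter.mp this).2
  have hAmax : ∀ a, σ a ≠ 0 → (a:ℕ) ≤ (A:ℕ) := fun a ha =>
    Fin.le_def.mp (Finset.le_max' _ a (Finset.mem_filter.mpr ⟨Finset.mem_univ a, ha⟩))
  have hBmax : ∀ b, τ b ≠ 0 → (b:ℕ) ≤ (B:ℕ) := fun b hb =>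
    Fin.le_def.mp (Finset.le_max' _ b (Finset.mem_filter.mpr ⟨Finset.mem_univ b, hb⟩))
  have hτBpos : 0 < τ B := lt_of_le_of_ne (hτ.1 B) (Ne.symm hBne)
  have hσApos : 0 < σ A := lt_of_le_of_ne (hσ.1 A) (Ne.symm hAne)
  -- Step 1: A ≤ B
  have hstep1 : (A:ℕ) ≤ (B:ℕ) := by
    by_contra hc
    push_neg at hc
    have hBn : (B:ℕ) < n := by have := A.isLt; omega
    set B' : Fin (n+1) := ⟨(B:ℕ)+1, by omega⟩ with hB'def
    have hB'v : (B':ℕ) = (B:ℕ)+1 := rfl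
    have hA : V A = V B' := by
      refine Finset.sum_congr rfl fun b _ => ?_
      by_cases hb : τ b = 0
      · rw [hb]; ring
      · have hbB : (b:ℕ) ≤ (B:ℕ) := hBmax b hb
        rw [u1_cont (show (b:ℕ) < (A:ℕ) by omega),
            u1_cont (show (b:ℕ) < (B':ℕ) by rw [hB'v]; omega)]
    have hB : V B - V B' = τ B := by
      rw [hVdef]
      simp only
      rw [← Finset.sum_sub_distrib, Finset.sum_eq_single B]
      · rw [u1_stop (le_refl _), u1_cont (show (B:ℕ) < (B':ℕ) by rw [hB'v]; omega)]
        ring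
      · intro b _ hbB
        by_cases hb : τ b = 0
        · rw [hb]; ring
        · have hbB' : (b:ℕ) ≤ (B:ℕ) := hBmax b hb
          have hblt : (b:ℕ) < (B:ℕ) := lt_of_le_of_ne hbB' (fun he => hbB (Fin.ext he))
          rw [u1_cont hblt, u1_cont (show (b:ℕ) < (B':ℕ) by rw [hB'v]; omega)]
          ring
      · intro hmem; exact absurd (Finset.mem_univ _) hmem
    have h1' : V B ≤ M1 := hVle B
    have h2' : V A = M1 := hVeq A hAne
    linarith
  -- Step 2: A = 0
  have hstep2 : (A:ℕ) = 0 := by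
    by_contra hc
    have hc1 : 1 ≤ (A:ℕ) := Nat.one_le_iff_ne_zero.mpr hc
    set A' : Fin (n+1) := ⟨(A:ℕ)-1, by have := A.isLt; omega⟩ with hA'def
    have hA'v : (A':ℕ) = (A:ℕ)-1 := rfl
    have hC : W B = W A := by
      refine Finset.sum_congr rfl fun a _ => ?_
      by_cases ha : σ a = 0
      · rw [ha]; ring
      · have haA : (a:ℕ) ≤ (A:ℕ) := hAmax a ha
        rw [u2_stop (show (a:ℕ) ≤ (B:ℕ) by omega), u2_stop haA]
    have hD : W A' - W A = σ A := by
      rw [hWdef]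
      simp only
      rw [← Finset.sum_sub_distrib, Finset.sum_eq_single A]
      · rw [u2_cont (show (A':ℕ) < (A:ℕ) by rw [hA'v]; omega), u2_stop (le_refl _),
            hA'v]
        have he : ((A:ℕ):ℝ) - 1 + 1 = (A:ℕ) := by ring
        have he2 : (((A:ℕ) - 1 : ℕ) : ℝ) = ((A:ℕ):ℝ) - 1 := by
          push_cast [hc1]; ring
        rw [he2]
        ring
      · intro a _ haA
        by_cases ha : σ a = 0
        · rw [ha]; ring
        · have haA' : (a:ℕ) ≤ (A:ℕ) := hAmax a ha
          have halt : (a:ℕ) < (A:ℕ) := lt_of_le_of_ne haA' (fun he => haA (Fin.ext he))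
          rw [u2_stop (show (a:ℕ) ≤ (A':ℕ) by rw [hA'v]; omega), u2_stop haA']
          ring
      · intro hmem; exact absurd (Finset.mem_univ _) hmem
    have h1' : W A' ≤ M2 := hWle A'
    have h2' : W B = M2 := hWeq B hBne
    linarith
  -- Step 3: M1 = 2
  have hσ0 : ∀ a : Fin (n+1), a ≠ 0 → σ a = 0 := by
    intro a ha
    by_contra hne
    have h0 : (a:ℕ) = 0 := by have := hAmax a hne; omega
    exact ha (Fin.ext (by simp [h0]))
  have hσ01 : σ 0 = 1 := by
    have hs := hσ.2
    rwa [Finset.sum_eq_single 0 (fun a _ ha => hσ0 a ha)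
      (fun hm => absurd (Finset.mem_univ _) hm)] at hs
  have hM1 : M1 = 2 := by
    rw [hM1def, Eu_left]
    rw [Finset.sum_eq_single 0 (fun a _ ha => by rw [hσ0 a ha]; ring)
      (fun hm => absurd (Finset.mem_univ _) hm)]
    rw [hσ01, one_mul]
    have hstep : ∀ b : Fin (n+1), τ b * u1 n 0 b = τ b * 2 := fun b => by
      rw [u1_stop (show ((0:Fin (n+1)):ℕ) ≤ (b:ℕ) by simp)]
      norm_num
    rw [Finset.sum_congr rfl (fun b _ => hstep b), ← Finset.sum_mul, hτ.2]
    norm_num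
  -- Step 4
  set one : Fin (n+1) := ⟨1, by omega⟩ with honedef
  have honev : (one:ℕ) = 1 := rfl
  have hVone : V one = 4 - 3 * τ 0 := by
    have hrw : ∀ b : Fin (n+1),
        τ b * u1 n one b = τ b * 4 - (if b = (0:Fin (n+1)) then 3 * τ b else 0) := by
      intro b
      by_cases hb : (b:ℕ) = 0
      · have hb' : b = 0 := Fin.ext (by simp [hb])
        rw [u1_cont (show (b:ℕ) < (one:ℕ) by rw [honev]; omega), if_pos hb', hb]
        push_cast; ring
      · have hb' : b ≠ 0 := fun he => hb (by rw [he]; rfl)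
        have hb1 : 1 ≤ (b:ℕ) := Nat.one_le_iff_ne_zero.mpr hb
        rw [u1_stop (show (one:ℕ) ≤ (b:ℕ) by rw [honev]; omega), if_neg hb', honev]
        norm_num
    rw [hVdef]
    simp only
    rw [Finset.sum_congr rfl (fun b _ => hrw b), Finset.sum_sub_distrib,
      ← Finset.sum_mul, hτ.2, Finset.sum_ite_eq' Finset.univ (0:Fin (n+1))
        (fun b => 3 * τ b)]
    simp
  have hfin : V one ≤ M1 := hVle one
  rw [hVone, hM1] at hfin
  linarith
end
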